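/- Suppose ζ satisfies Properties P1–P4 and ζ({o}) > 0, and let ρ : (0,∞) → [0,∞) be the function such that ρ(λ) = lim_{s→∞} E[ζ(H_{λ,s})]/(λ s^d) for each λ > 0 (this limit exists). Then the function λ ↦ λ·ρ(λ) is strictly increasing on the interval (0, ζ({o})/(c₂·π_d)), where c₂ is the constant in P4 and π_d is the Lebesgue volume of the unit ball in ℝ^d. -/

import Mathlib

open MeasureTheory ProbabilityTheory Filter Set Metric Bornology
open scoped Classical ENNReal NNReal symmDiff

noncomputable section

/-- Points of `ℝ^d`. -/
abbrev Pt (d : ℕ) := EuclideanSpace ℝ (Fin d)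

/-- The half-open cube `Q_s = [-s/2, s/2)^d`. -/
def cube (d : ℕ) (s : ℝ) : Set (Pt d) := {x | ∀ i, x i ∈ Set.Ico (-(s / 2)) (s / 2)}

/-- The uniform distribution on `Q_s`. -/
def unifCube (d : ℕ) (s : ℝ) : Measure (Pt d) :=
  (volume (cube d s))⁻¹ • volume.restrict (cube d s)

/-- `E[ζ(H_{λ,s})]`, where `H_{λ,s} = {Y_1, …, Y_N}` with `N` a Poisson random variable of
mean `λ s^d` independent of an i.i.d. sequence `Y_1, Y_2, …` of uniform points of `Q_s`. -/
def poissonExp (d : ℕ) (zeta : Finset (Pt d) → ℝ) (lam s : ℝ) : ℝ :=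
  ∑' k : ℕ, (Real.exp (-(lam * s ^ d)) * (lam * s ^ d) ^ k / (Nat.factorial k : ℝ)) *
    ∫ y : Fin k → Pt d, zeta (Finset.image y Finset.univ) ∂(Measure.pi fun _ => unifCube d s)

/-- `|∂_Z(Y)|`: the number of points of `Y` lying within Euclidean distance 1 of `Z`. -/
def bdry (d : ℕ) (Y Z : Finset (Pt d)) : ℕ :=
  {y ∈ (Y : Set (Pt d)) | ∃ z ∈ Z, dist y z ≤ 1}.ncard

/-- The rescaled set `r⁻¹ 𝒳`. -/
def scaleSet (d : ℕ) (r : ℝ) (X : Finset (Pt d)) : Finset (Pt d) :=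
  X.image fun x => r⁻¹ • x

/-- `ζ*(A) = sup {ζ(X) : X ⊆ A finite}`. -/
def zetaStar (d : ℕ) (zeta : Finset (Pt d) → ℝ) (A : Set (Pt d)) : ℝ :=
  sSup {t | ∃ X : Finset (Pt d), (X : Set (Pt d)) ⊆ A ∧ t = zeta X}

/-- Domination number of the geometric graph `G(X, r)`. -/
def domNum (d : ℕ) (r : ℝ) (X : Finset (Pt d)) : ℕ :=
  sInf {n | ∃ A ⊆ X, A.card = n ∧ ∀ x ∈ X, ∃ a ∈ A, dist x a ≤ r}

/-- Independence number of the geometric graph `G(X, r)`. -/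
def indepNum (d : ℕ) (r : ℝ) (X : Finset (Pt d)) : ℕ :=
  sSup {n | ∃ A ⊆ X, A.card = n ∧ ∀ x ∈ A, ∀ y ∈ A, x ≠ y → r < dist x y}

/-- Clique-covering number of the geometric graph `G(X, r)`. -/
def cliqueCoverNum (d : ℕ) (r : ℝ) (X : Finset (Pt d)) : ℕ :=
  sInf {n | ∃ P : Finset (Finset (Pt d)), P.card = n ∧
    (∀ C ∈ P, C ⊆ X ∧ C.Nonempty ∧ ∀ x ∈ C, ∀ y ∈ C, x ≠ y → dist x y ≤ r) ∧
    ∀ x ∈ X, ∃! C, C ∈ P ∧ x ∈ C}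

/-- Vertex cover number of the geometric graph `G(X, r)`. -/
def vcNum (d : ℕ) (r : ℝ) (X : Finset (Pt d)) : ℕ :=
  sInf {n | ∃ A ⊆ X, A.card = n ∧
    ∀ x ∈ X, ∀ y ∈ X, x ≠ y → dist x y ≤ r → x ∈ A ∨ y ∈ A}

/-- Number of isolated vertices of the geometric graph `G(X, r)`. -/
def isolCount (d : ℕ) (r : ℝ) (X : Finset (Pt d)) : ℕ :=
  {x ∈ (X : Set (Pt d)) | ∀ y ∈ X, y ≠ x → r < dist x y}.ncard

/-- `κ(A)`: the minimal number of closed unit balls whose union contains `A`. -/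
def covNum (d : ℕ) (A : Set (Pt d)) : ℕ :=
  sInf {n | ∃ C : Finset (Pt d), C.card = n ∧ A ⊆ ⋃ x ∈ C, Metric.closedBall x 1}

/-- `α*(A)`: the maximum cardinality of a finite subset of `A` with pairwise distances `> 1`. -/
def packNum (d : ℕ) (A : Set (Pt d)) : ℕ :=
  sSup {n | ∃ X : Finset (Pt d), (X : Set (Pt d)) ⊆ A ∧ X.card = n ∧
    ∀ x ∈ X, ∀ y ∈ X, x ≠ y → 1 < dist x y}

/-- `γ*(A) = sup {γ(G(X,1)) : X ⊆ A finite}`. -/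
def domStar (d : ℕ) (A : Set (Pt d)) : ℕ :=
  sSup {n | ∃ X : Finset (Pt d), (X : Set (Pt d)) ⊆ A ∧ domNum d 1 X = n}

/-- Minimum weight of a travelling salesman tour through `X`, for the weight function `w`
(a tour is a Hamiltonian cycle of the complete graph on `X`, and an edge `{x,y}` has
weight `w (x - y)`), with the convention that the value is `0` when `|X| ≤ 2`. -/
def TSPw (d : ℕ) (w : Pt d → ℝ) (X : Finset (Pt d)) : ℝ :=
  if h : 3 ≤ X.card then
    haveI : NeZero X.card := ⟨by omega⟩
    sInf {t | ∃ g : Fin X.card → Pt d, Function.Injective g ∧ (∀ i, g i ∈ X) ∧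
      t = ∑ i, w (g (i + 1) - g i)}
  else 0

/-- Maximum `H`-packing number of the geometric graph `G(X, r)`. -/
def hPackNum {V : Type} [Fintype V] (H : SimpleGraph V) (d : ℕ) (r : ℝ)
    (X : Finset (Pt d)) : ℕ :=
  sSup {m | ∃ φ : Fin m → V → Pt d,
    (∀ i, Function.Injective (φ i)) ∧ (∀ i v, φ i v ∈ X) ∧
    (∀ i u v, H.Adj u v → dist (φ i u) (φ i v) ≤ r) ∧
    (∀ i j, i ≠ j → ∀ u v, φ i u ≠ φ j v)}

/-
Write `I k = E ζ(X_{k,s})` for `k` i.i.d. uniform points of `Q_s`, so that `E ζ(H_{λ,s})` is the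
`Po(λ s^d)`-average of `I`. Adding a uniform point `x` to `k` points costs, by P4, at most `c₂`
times the number of old points within distance 1 of `x`, whose mean is at most `k π_d / s^d`; so
`I (k+1) ≥ I k + z - β k` with `z = ζ({o})`, `β = c₂ π_d / s^d`. Then `I k - (z k - β k(k-1)/2)` is
nondecreasing in `k`, and Poisson laws increase stochastically (`Po(μ') = Po(μ) ∗ Po(μ' - μ)`),
so with `E[N] = μ` and `E[N(N-1)] = μ²` the Poisson average of `I` increases from `μ` to `μ'` by
at least `(μ' - μ)(z - β(μ + μ')/2)`. Dividing by `s^d` and letting `s → ∞`,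
`λ'ρ(λ') - λρ(λ) ≥ (λ' - λ)(ζ({o}) - c₂ π_d (λ + λ')/2) > 0`.
-/

open Nat in
lemma hasSum_poissonMeasure_descFactorial (r : ℝ≥0) (k : ℕ) :
    HasSum (fun n ↦ Real.exp (-r) * r ^ n / n ! * (n.descFactorial k : ℝ)) (r ^ k) := by
  rw [← hasSum_nat_add_iff' k, Finset.sum_eq_zero fun n hn ↦ by
    simp [Nat.descFactorial_eq_zero_iff_lt.2 (Finset.mem_range.1 hn)], sub_zero]
  have hshift : ∀ n, Real.exp (-r) * r ^ (n + k) / (n + k)! * ((n + k).descFactorial k : ℝ) =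
      r ^ k * (Real.exp (-r) * r ^ n / n !) := fun n ↦ by
    have hfac := Nat.factorial_mul_descFactorial (Nat.le_add_left k n)
    rw [Nat.add_sub_cancel] at hfac
    rw [← hfac]
    push_cast
    field_simp
    ring
  simpa [hshift] using (hasSum_one_poissonMeasure r).mul_left ((r : ℝ) ^ k)

lemma integrable_poissonMeasure_descFactorial (r : ℝ≥0) (k : ℕ) :
    Integrable (fun n : ℕ ↦ (n.descFactorial k : ℝ)) (poissonMeasure r) := by
  rw [integrable_poissonMeasure_iff]
  simpa using (hasSum_poissonMeasure_descFactorial r k).summable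

lemma integral_poissonMeasure_descFactorial (r : ℝ≥0) (k : ℕ) :
    ∫ n, (n.descFactorial k : ℝ) ∂(poissonMeasure r) = r ^ k := by
  rw [integral_poissonMeasure]
  simpa using (hasSum_poissonMeasure_descFactorial r k).tsum_eq

lemma integrable_poissonMeasure_of_abs_le {I : ℕ → ℝ} {C : ℝ} (hI : ∀ n, |I n| ≤ C * n)
    (r : ℝ≥0) : Integrable I (poissonMeasure r) :=
  .mono' ((integrable_poissonMeasure_descFactorial r 1).const_mul C) .of_discrete
    (ae_of_all _ fun n ↦ by simpa using hI n)

lemma integral_le_integral_conv_of_monotone {M : Type*} [AddCommMonoid M] [PartialOrder M]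
    [CanonicallyOrderedAdd M] [MeasurableSpace M] [MeasurableAdd₂ M] {J : M → ℝ}
    (hJ : Monotone J) (μ ν : Measure M) [SFinite μ] [IsProbabilityMeasure ν]
    (hμ : Integrable J μ) (hμν : Integrable J (μ ∗ ν)) :
    ∫ x, J x ∂μ ≤ ∫ x, J x ∂(μ ∗ ν) := by
  rw [Measure.conv, integral_map (by fun_prop) hμν.aestronglyMeasurable]
  calc ∫ x, J x ∂μ = ∫ p, J p.1 ∂(μ.prod ν) := by simp [integral_fun_fst]
    _ ≤ ∫ p, J (p.1 + p.2) ∂(μ.prod ν) :=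
      integral_mono (hμ.comp_fst ν) (hμν.comp_measurable (by fun_prop))
        fun p ↦ hJ le_self_add

lemma cast_descFactorial_two_succ_sub (n : ℕ) :
    ((n + 1).descFactorial 2 : ℝ) - n.descFactorial 2 = 2 * n := by
  rcases n with _ | m <;> simp [Nat.descFactorial]; ring

lemma integral_poissonMeasure_add_le {I : ℕ → ℝ} {z β : ℝ}
    (hstep : ∀ n, I n + z - β * n ≤ I (n + 1)) {r₁ r₂ : ℝ≥0} (hr : r₁ ≤ r₂)
    (h₁ : Integrable I (poissonMeasure r₁)) (h₂ : Integrable I (poissonMeasure r₂)) :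
    ∫ n, I n ∂(poissonMeasure r₁) + (r₂ - r₁ : ℝ) * (z - β * (r₁ + r₂) / 2)
      ≤ ∫ n, I n ∂(poissonMeasure r₂) := by
  -- `q` has the increments `z - β n` that `I` dominates, so `I - q` is monotone.
  set q : ℕ → ℝ := fun n ↦ z * n.descFactorial 1 - β / 2 * n.descFactorial 2
  have hq : ∀ r, Integrable q (poissonMeasure r) := fun r ↦
    ((integrable_poissonMeasure_descFactorial r 1).const_mul z).sub
      ((integrable_poissonMeasure_descFactorial r 2).const_mul (β / 2))
  have hq_integral : ∀ r : ℝ≥0, ∫ n, q n ∂(poissonMeasure r) = z * r - β / 2 * r ^ 2 := by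
    intro r
    rw [integral_sub ((integrable_poissonMeasure_descFactorial r 1).const_mul z)
      ((integrable_poissonMeasure_descFactorial r 2).const_mul (β / 2)),
      integral_const_mul, integral_const_mul, integral_poissonMeasure_descFactorial,
      integral_poissonMeasure_descFactorial, pow_one]
  have hmono : Monotone (I - q) := monotone_nat_of_le_succ fun n ↦ by
    have h := cast_descFactorial_two_succ_sub n
    simp only [Pi.sub_apply, q, Nat.descFactorial_one]
    push_cast
    linear_combination hstep n - β / 2 * h
  obtain ⟨δ, rfl⟩ := exists_add_of_le hr
  have hconv := integral_le_integral_conv_of_monotone hmono (poissonMeasure r₁)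
    (poissonMeasure δ) (h₁.sub (hq r₁))
    (by rw [poissonMeasure_conv_poissonMeasure]; exact h₂.sub (hq _))
  simp only [Pi.sub_apply] at hconv
  rw [poissonMeasure_conv_poissonMeasure, integral_sub h₁ (hq _), integral_sub h₂ (hq _),
    hq_integral, hq_integral] at hconv
  push_cast at hconv ⊢
  nlinarith [hconv]

section FinCons
variable {α E : Type*} [MeasurableSpace α] [NormedAddCommGroup E]
  (ν : Measure α) [SigmaFinite ν] {k : ℕ}

lemma piFinSuccAbove_zero_symm_apply (p : α × (Fin k → α)) :
    (MeasurableEquiv.piFinSuccAbove (fun _ : Fin (k + 1) ↦ α) 0).symm p = Fin.cons p.1 p.2 := by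
  simp [MeasurableEquiv.piFinSuccAbove_symm_apply, Fin.insertNthEquiv, Fin.insertNth_zero']

lemma integrable_comp_fin_cons {f : (Fin (k + 1) → α) → E}
    (hf : Integrable f (Measure.pi fun _ ↦ ν)) :
    Integrable (fun p : α × (Fin k → α) ↦ f (Fin.cons p.1 p.2))
      (ν.prod (Measure.pi fun _ ↦ ν)) := by
  have hmp := (measurePreserving_piFinSuccAbove (fun _ : Fin (k + 1) ↦ ν) 0).symm
  convert (hmp.integrable_comp_emb (MeasurableEquiv.measurableEmbedding _)).mpr hf using 1
  funext p
  rw [Function.comp_apply, piFinSuccAbove_zero_symm_apply]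

lemma integral_pi_fin_succ [NormedSpace ℝ E] {f : (Fin (k + 1) → α) → E}
    (hf : Integrable f (Measure.pi fun _ ↦ ν)) :
    ∫ y, f y ∂(Measure.pi fun _ ↦ ν) = ∫ y, ∫ x, f (Fin.cons x y) ∂ν ∂(Measure.pi fun _ ↦ ν) := by
  have hmp := (measurePreserving_piFinSuccAbove (fun _ : Fin (k + 1) ↦ ν) 0).symm
  rw [← hmp.integral_comp', ← integral_prod_symm _ (integrable_comp_fin_cons ν hf)]
  simp [piFinSuccAbove_zero_symm_apply]

end FinCons

lemma volume_cube (d : ℕ) {s : ℝ} (hs : 0 < s) :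
    volume (cube d s) = ENNReal.ofReal (s ^ d) := by
  have h : cube d s = (MeasurableEquiv.toLp 2 (Fin d → ℝ)).symm ⁻¹'
      (Set.univ.pi fun _ : Fin d => Set.Ico (-(s / 2)) (s / 2)) := by
    ext x; simp [cube, Set.mem_pi, MeasurableEquiv.toLp]; rfl
  rw [h, (EuclideanSpace.volume_preserving_symm_measurableEquiv_toLp (Fin d)).measure_preimage
    (MeasurableSet.univ_pi fun _ => measurableSet_Ico).nullMeasurableSet, volume_pi_pi]
  simp [Real.volume_Ico, ← ENNReal.ofReal_pow hs.le]

lemma isProbabilityMeasure_unifCube (d : ℕ) {s : ℝ} (hs : 0 < s) :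
    IsProbabilityMeasure (unifCube d s) := by
  constructor
  rw [unifCube, Measure.smul_apply, Measure.restrict_apply_univ, volume_cube d hs,
    smul_eq_mul, ENNReal.inv_mul_cancel (by simp [pow_pos hs d]) ENNReal.ofReal_ne_top]

lemma nullSingletonClass_unifCube {d : ℕ} (hd : 1 ≤ d) (s : ℝ) :
    NullSingletonClass (unifCube d s) := by
  have : Nonempty (Fin d) := ⟨⟨0, hd⟩⟩
  exact ⟨fun x ↦ by simp [unifCube]⟩

lemma unifCube_real_closedBall_le (d : ℕ) {s : ℝ} (hs : 0 < s) (z : Pt d) :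
    (unifCube d s).real (closedBall z 1) ≤ (volume (closedBall (0 : Pt d) 1)).toReal / s ^ d := by
  rw [measureReal_def, unifCube, Measure.smul_apply, smul_eq_mul, volume_cube d hs,
    ENNReal.toReal_mul, ENNReal.toReal_inv, ENNReal.toReal_ofReal (by positivity),
    ← Measure.addHaar_closedBall_center volume z 1, inv_mul_eq_div]
  gcongr
  · exact measure_closedBall_lt_top.ne
  · exact Measure.restrict_le_self

lemma Finset.image_univ_fin_cons {α : Type*} [DecidableEq α] {k : ℕ} (x : α) (y : Fin k → α) :
    Finset.image (Fin.cons x y : Fin (k + 1) → α) Finset.univ =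
      insert x (Finset.image y Finset.univ) := by
  ext
  simp [Fin.exists_fin_succ, eq_comm]

/-- `E[ζ(X_{k,s})]` for the binomial process `X_{k,s}` of `k` i.i.d. uniform points of `Q_s`. -/
def binomialExp (d : ℕ) (zeta : Finset (Pt d) → ℝ) (s : ℝ) (k : ℕ) : ℝ :=
  ∫ y : Fin k → Pt d, zeta (Finset.image y Finset.univ) ∂(Measure.pi fun _ ↦ unifCube d s)

section Zeta
variable {d : ℕ} {zeta : Finset (Pt d) → ℝ}

lemma zeta_singleton (hP2 : ∀ (X : Finset (Pt d)) (x : Pt d), zeta (X.image fun y ↦ x + y) = zeta X)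
    (x : Pt d) : zeta {x} = zeta {0} := by
  simpa using hP2 {0} x

lemma zeta_le_card_mul (hzeta0 : zeta ∅ = 0)
    (hP2 : ∀ (X : Finset (Pt d)) (x : Pt d), zeta (X.image fun y ↦ x + y) = zeta X) {c1 : ℝ}
    (hP3 : ∀ Y Z : Finset (Pt d), Disjoint Y Z → zeta (Y ∪ Z) ≤ zeta Y + zeta Z + c1)
    (X : Finset (Pt d)) : zeta X ≤ X.card * (zeta {0} + c1) := by
  induction X using Finset.induction_on with
  | empty => simp [hzeta0]
  | @insert x X hx ih =>
    have h := hP3 {x} X (Finset.disjoint_singleton_left.2 hx)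
    rw [← Finset.insert_eq, zeta_singleton hP2] at h
    rw [Finset.card_insert_of_notMem hx]
    push_cast
    linarith

lemma norm_zeta_image_le (hzeta0 : zeta ∅ = 0) (hzetann : ∀ X, 0 ≤ zeta X)
    (hP2 : ∀ (X : Finset (Pt d)) (x : Pt d), zeta (X.image fun y ↦ x + y) = zeta X) {c1 : ℝ}
    (hc1 : 0 ≤ c1)
    (hP3 : ∀ Y Z : Finset (Pt d), Disjoint Y Z → zeta (Y ∪ Z) ≤ zeta Y + zeta Z + c1)
    {k : ℕ} (y : Fin k → Pt d) : ‖zeta (Finset.image y Finset.univ)‖ ≤ k * (zeta {0} + c1) := by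
  rw [Real.norm_of_nonneg (hzetann _)]
  refine (zeta_le_card_mul hzeta0 hP2 hP3 _).trans ?_
  gcongr
  · linarith [hzetann {0}]
  · exact_mod_cast Finset.card_image_le.trans (by simp)

def nearCount (Y : Finset (Pt d)) (x : Pt d) : ℕ :=
  (Y.filter fun p ↦ dist p x ≤ 1).card

lemma le_zeta_insert (hP2 : ∀ (X : Finset (Pt d)) (x : Pt d), zeta (X.image fun y ↦ x + y) = zeta X)
    {c2 : ℝ} (hP4 : ∀ Y Z : Finset (Pt d), Disjoint Y Z →
      zeta Y + zeta Z - c2 * (bdry d Y Z : ℝ) ≤ zeta (Y ∪ Z))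
    {Y : Finset (Pt d)} {x : Pt d} (hx : x ∉ Y) :
    zeta Y + zeta {0} - c2 * nearCount Y x ≤ zeta (insert x Y) := by
  have hbdry : bdry d Y {x} = nearCount Y x := by
    rw [bdry, nearCount, ← Set.ncard_coe_finset]
    congr 1
    ext p
    simp
  have h := hP4 Y {x} (Finset.disjoint_singleton_right.2 hx)
  rwa [zeta_singleton hP2, hbdry, Finset.union_comm, ← Finset.insert_eq] at h

lemma nearCount_eq_sum_indicator (Y : Finset (Pt d)) :
    (fun x ↦ (nearCount Y x : ℝ)) = fun x ↦ ∑ p ∈ Y, (closedBall p 1).indicator 1 x := by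
  ext x
  simp [nearCount, Set.indicator_apply, dist_comm x]

lemma integrable_nearCount (ν : Measure (Pt d)) [IsFiniteMeasure ν] (Y : Finset (Pt d)) :
    Integrable (fun x ↦ (nearCount Y x : ℝ)) ν := by
  rw [nearCount_eq_sum_indicator]
  exact integrable_finsetSum _ fun p _ ↦ (integrable_const 1).indicator measurableSet_closedBall

lemma integral_nearCount_le {ν : Measure (Pt d)} [IsFiniteMeasure ν] {a : ℝ}
    (hball : ∀ p, ν.real (closedBall p 1) ≤ a) (Y : Finset (Pt d)) :
    ∫ x, (nearCount Y x : ℝ) ∂ν ≤ Y.card * a := by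
  rw [nearCount_eq_sum_indicator, integral_finsetSum _ fun p _ ↦
    (integrable_const 1).indicator measurableSet_closedBall]
  calc ∑ p ∈ Y, ∫ x, (closedBall p 1).indicator 1 x ∂ν
      = ∑ p ∈ Y, ν.real (closedBall p 1) := by
        simp [integral_indicator_one measurableSet_closedBall]
    _ ≤ Y.card * a := by
        simpa using Finset.sum_le_sum fun p (_ : p ∈ Y) ↦ hball p

lemma le_integral_zeta_insert
    (hP2 : ∀ (X : Finset (Pt d)) (x : Pt d), zeta (X.image fun y ↦ x + y) = zeta X)
    {c2 : ℝ} (hc2 : 0 ≤ c2) (hP4 : ∀ Y Z : Finset (Pt d), Disjoint Y Z →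
      zeta Y + zeta Z - c2 * (bdry d Y Z : ℝ) ≤ zeta (Y ∪ Z))
    {ν : Measure (Pt d)} [IsProbabilityMeasure ν] [NullSingletonClass ν] {a : ℝ}
    (hball : ∀ p, ν.real (closedBall p 1) ≤ a) (Y : Finset (Pt d))
    (hint : Integrable (fun x ↦ zeta (insert x Y)) ν) :
    zeta Y + zeta {0} - c2 * (Y.card * a) ≤ ∫ x, zeta (insert x Y) ∂ν := by
  have hae : ∀ᵐ x ∂ν, zeta Y + zeta {0} - c2 * nearCount Y x ≤ zeta (insert x Y) := by
    filter_upwards [Y.countable_toSet.ae_notMem ν] with x hx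
    exact le_zeta_insert hP2 hP4 hx
  have hN := (integrable_nearCount ν Y).const_mul c2
  calc zeta Y + zeta {0} - c2 * (Y.card * a)
      ≤ zeta Y + zeta {0} - c2 * ∫ x, (nearCount Y x : ℝ) ∂ν := by
        gcongr
        exact integral_nearCount_le hball Y
    _ = ∫ x, (zeta Y + zeta {0} - c2 * nearCount Y x) ∂ν := by
        rw [integral_sub (integrable_const _) hN, integral_const, integral_const_mul]
        simp
    _ ≤ ∫ x, zeta (insert x Y) ∂ν := integral_mono_ae ((integrable_const _).sub hN) hint hae

lemma binomialExp_add_le_binomialExp_succ (hd : 1 ≤ d) (hzeta0 : zeta ∅ = 0)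
    (hzetann : ∀ X, 0 ≤ zeta X)
    (hP1 : ∀ k : ℕ, Measurable fun y : Fin k → Pt d => zeta (Finset.image y Finset.univ))
    (hP2 : ∀ (X : Finset (Pt d)) (x : Pt d), zeta (X.image fun y ↦ x + y) = zeta X)
    {c1 c2 : ℝ} (hc1 : 0 ≤ c1) (hc2 : 0 ≤ c2)
    (hP3 : ∀ Y Z : Finset (Pt d), Disjoint Y Z → zeta (Y ∪ Z) ≤ zeta Y + zeta Z + c1)
    (hP4 : ∀ Y Z : Finset (Pt d), Disjoint Y Z →
      zeta Y + zeta Z - c2 * (bdry d Y Z : ℝ) ≤ zeta (Y ∪ Z))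
    {s : ℝ} (hs : 0 < s) (k : ℕ) :
    binomialExp d zeta s k + zeta {0} -
        c2 * ((volume (closedBall (0 : Pt d) 1)).toReal / s ^ d) * k
      ≤ binomialExp d zeta s (k + 1) := by
  have := isProbabilityMeasure_unifCube d hs
  have := nullSingletonClass_unifCube hd s
  have hint : ∀ n, Integrable (fun y : Fin n → Pt d ↦ zeta (Finset.image y Finset.univ))
      (Measure.pi fun _ ↦ unifCube d s) := fun n ↦
    .of_bound (hP1 n).aestronglyMeasurable _
      (ae_of_all _ (norm_zeta_image_le hzeta0 hzetann hP2 hc1 hP3))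
  have hcons := integrable_comp_fin_cons (unifCube d s) (hint (k + 1))
  simp only [Finset.image_univ_fin_cons] at hcons
  have hslice : ∀ y : Fin k → Pt d, Integrable
      (fun x ↦ zeta (insert x (Finset.image y Finset.univ))) (unifCube d s) := fun y ↦ by
    have hmeas : Measurable fun x : Pt d ↦ (Fin.cons x y : Fin (k + 1) → Pt d) := by fun_prop
    simpa only [Function.comp_def, Finset.image_univ_fin_cons] using
      Integrable.of_bound (μ := unifCube d s) ((hP1 (k + 1)).comp hmeas).aestronglyMeasurable _
        (ae_of_all _ fun x ↦ norm_zeta_image_le hzeta0 hzetann hP2 hc1 hP3 (Fin.cons x y))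
  have hstep : ∀ y : Fin k → Pt d, zeta (Finset.image y Finset.univ) + zeta {0} -
      c2 * ((volume (closedBall (0 : Pt d) 1)).toReal / s ^ d) * k ≤
      ∫ x, zeta (insert x (Finset.image y Finset.univ)) ∂(unifCube d s) := fun y ↦ by
    refine le_trans ?_ (le_integral_zeta_insert hP2 hc2 hP4 (unifCube_real_closedBall_le d hs)
      _ (hslice y))
    rw [mul_assoc, mul_comm _ (k : ℝ)]
    gcongr
    exact_mod_cast Finset.card_image_le.trans (by simp)
  rw [binomialExp, binomialExp, integral_pi_fin_succ _ (hint (k + 1))]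
  simp only [Finset.image_univ_fin_cons]
  calc _ = ∫ y : Fin k → Pt d, (zeta (Finset.image y Finset.univ) + zeta {0} -
        c2 * ((volume (closedBall (0 : Pt d) 1)).toReal / s ^ d) * k)
          ∂(Measure.pi fun _ ↦ unifCube d s) := by
        rw [integral_sub ?_ (integrable_const _), integral_add (hint k) (integrable_const _)]
        · simp
        · exact (hint k).add (integrable_const _)
    _ ≤ _ := integral_mono ((hint k).add (integrable_const _) |>.sub (integrable_const _))
        hcons.integral_prod_right hstep

lemma abs_binomialExp_le (hzeta0 : zeta ∅ = 0) (hzetann : ∀ X, 0 ≤ zeta X)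
    (hP2 : ∀ (X : Finset (Pt d)) (x : Pt d), zeta (X.image fun y ↦ x + y) = zeta X)
    {c1 : ℝ} (hc1 : 0 ≤ c1)
    (hP3 : ∀ Y Z : Finset (Pt d), Disjoint Y Z → zeta (Y ∪ Z) ≤ zeta Y + zeta Z + c1)
    {s : ℝ} (hs : 0 < s) (k : ℕ) :
    |binomialExp d zeta s k| ≤ (zeta {0} + c1) * k := by
  have := isProbabilityMeasure_unifCube d hs
  simpa [binomialExp, mul_comm] using
    norm_integral_le_of_norm_le_const (μ := Measure.pi fun _ ↦ unifCube d s)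
      (ae_of_all _ (norm_zeta_image_le hzeta0 hzetann hP2 hc1 hP3 (k := k)))

lemma poissonExp_eq_integral {lam s : ℝ} {r : ℝ≥0}
    (hr : (r : ℝ) = lam * s ^ d) :
    poissonExp d zeta lam s = ∫ k, binomialExp d zeta s k ∂(poissonMeasure r) := by
  rw [integral_poissonMeasure, hr]
  rfl

lemma poissonExp_add_le (hd : 1 ≤ d) (hzeta0 : zeta ∅ = 0) (hzetann : ∀ X, 0 ≤ zeta X)
    (hP1 : ∀ k : ℕ, Measurable fun y : Fin k → Pt d => zeta (Finset.image y Finset.univ))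
    (hP2 : ∀ (X : Finset (Pt d)) (x : Pt d), zeta (X.image fun y ↦ x + y) = zeta X)
    {c1 c2 : ℝ} (hc1 : 0 ≤ c1) (hc2 : 0 ≤ c2)
    (hP3 : ∀ Y Z : Finset (Pt d), Disjoint Y Z → zeta (Y ∪ Z) ≤ zeta Y + zeta Z + c1)
    (hP4 : ∀ Y Z : Finset (Pt d), Disjoint Y Z →
      zeta Y + zeta Z - c2 * (bdry d Y Z : ℝ) ≤ zeta (Y ∪ Z))
    {s : ℝ} (hs : 0 < s) {lam lam' : ℝ} (hlam : 0 ≤ lam) (hle : lam ≤ lam') :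
    poissonExp d zeta lam s + (lam' - lam) * s ^ d *
        (zeta {0} - c2 * (volume (closedBall (0 : Pt d) 1)).toReal * (lam + lam') / 2)
      ≤ poissonExp d zeta lam' s := by
  have hsd : 0 < s ^ d := pow_pos hs d
  have hI := integrable_poissonMeasure_of_abs_le
    (abs_binomialExp_le hzeta0 hzetann hP2 hc1 hP3 hs)
  let r₁ : ℝ≥0 := ⟨lam * s ^ d, by positivity⟩
  let r₂ : ℝ≥0 := ⟨lam' * s ^ d, by nlinarith⟩
  have h := integral_poissonMeasure_add_le
    (binomialExp_add_le_binomialExp_succ hd hzeta0 hzetann hP1 hP2 hc1 hc2 hP3 hP4 hs)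
    (show r₁ ≤ r₂ from Subtype.mk_le_mk.2 (by gcongr)) (hI r₁) (hI r₂)
  have hr₁ : (r₁ : ℝ) = lam * s ^ d := rfl
  have hr₂ : (r₂ : ℝ) = lam' * s ^ d := rfl
  rw [hr₁, hr₂] at h
  rw [poissonExp_eq_integral hr₁, poissonExp_eq_integral hr₂]
  convert h using 2
  field_simp

end Zeta

theorem lambda_rho_strict_mono_general {d : ℕ} (hd : 1 ≤ d)
    (zeta : Finset (Pt d) → ℝ) (hzeta0 : zeta ∅ = 0) (hzetann : ∀ X, 0 ≤ zeta X)
    -- P1 (measurability)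
    (hP1 : ∀ k : ℕ, Measurable fun y : Fin k → Pt d => zeta (Finset.image y Finset.univ))
    -- P2 (translation invariance)
    (hP2 : ∀ (X : Finset (Pt d)) (x : Pt d), zeta (X.image fun y => x + y) = zeta X)
    (c1 c2 : ℝ) (hc1 : 0 ≤ c1) (hc2 : 0 ≤ c2)
    -- P3 (almost subadditivity)
    (hP3 : ∀ Y Z : Finset (Pt d), Disjoint Y Z → zeta (Y ∪ Z) ≤ zeta Y + zeta Z + c1)
    -- P4 (superadditivity up to boundary)
    (hP4 : ∀ Y Z : Finset (Pt d), Disjoint Y Z →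
      zeta Y + zeta Z - c2 * (bdry d Y Z : ℝ) ≤ zeta (Y ∪ Z))
    (ρ : ℝ → ℝ)
    (hρ : ∀ lam : ℝ, 0 < lam →
      Tendsto (fun s : ℝ => poissonExp d zeta lam s / (lam * s ^ d)) atTop
        (nhds (ρ lam))) :
    ∀ lam lam' : ℝ, 0 < lam → lam < lam' →
      lam' * (c2 * (volume (Metric.closedBall (0 : Pt d) 1)).toReal) < zeta {0} →
      lam * ρ lam < lam' * ρ lam' := by
  intro lam lam' hlam hlt hsmall
  set b := (volume (closedBall (0 : Pt d) 1)).toReal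
  have hlim : ∀ l, 0 < l → Tendsto (fun s ↦ poissonExp d zeta l s / s ^ d) atTop
      (nhds (l * ρ l)) := fun l hl ↦ by
    refine ((hρ l hl).const_mul l).congr' ?_
    filter_upwards [eventually_gt_atTop 0] with s hs
    field_simp [(pow_pos hs d).ne']
  have hgap : ∀ᶠ s in atTop, (lam' - lam) * (zeta {0} - c2 * b * (lam + lam') / 2) ≤
      poissonExp d zeta lam' s / s ^ d - poissonExp d zeta lam s / s ^ d := by
    filter_upwards [eventually_gt_atTop 0] with s hs
    have h := poissonExp_add_le hd hzeta0 hzetann hP1 hP2 hc1 hc2 hP3 hP4 hs hlam.le hlt.le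
    rw [← sub_div, le_div_iff₀ (pow_pos hs d)]
    linarith
  have hpos : 0 < (lam' - lam) * (zeta {0} - c2 * b * (lam + lam') / 2) := by
    have hb : 0 ≤ c2 * b := mul_nonneg hc2 ENNReal.toReal_nonneg
    refine mul_pos (sub_pos.2 hlt) ?_
    nlinarith
  linarith [ge_of_tendsto ((hlim lam' (hlam.trans hlt)).sub (hlim lam hlam)) hgap]

/-- if `ζ({o}) > 0` then `λ ↦ λ·ρ(λ)` is strictly increasing on
`(0, ζ({o})/(c₂ π_d))`, where `π_d` is the volume of the unit ball. -/
theorem lambda_rho_strict_mono {d : ℕ} (hd : 1 ≤ d)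
    (zeta : Finset (Pt d) → ℝ) (hzeta0 : zeta ∅ = 0) (hzetann : ∀ X, 0 ≤ zeta X)
    -- P1 (measurability)
    (hP1 : ∀ k : ℕ, Measurable fun y : Fin k → Pt d => zeta (Finset.image y Finset.univ))
    -- P2 (translation invariance)
    (hP2 : ∀ (X : Finset (Pt d)) (x : Pt d), zeta (X.image fun y => x + y) = zeta X)
    (c1 c2 : ℝ) (hc1 : 0 ≤ c1) (hc2 : 0 ≤ c2)
    -- P3 (almost subadditivity)
    (hP3 : ∀ Y Z : Finset (Pt d), Disjoint Y Z → zeta (Y ∪ Z) ≤ zeta Y + zeta Z + c1)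
    -- P4 (superadditivity up to boundary)
    (hP4 : ∀ Y Z : Finset (Pt d), Disjoint Y Z →
      zeta Y + zeta Z - c2 * (bdry d Y Z : ℝ) ≤ zeta (Y ∪ Z))
    (hzo : 0 < zeta {0})
    (ρ : ℝ → ℝ)
    (hρ : ∀ lam : ℝ, 0 < lam →
      Tendsto (fun s : ℝ => poissonExp d zeta lam s / (lam * s ^ d)) atTop
        (nhds (ρ lam))) :
    ∀ lam lam' : ℝ, 0 < lam → lam < lam' →
      lam' * (c2 * (volume (Metric.closedBall (0 : Pt d) 1)).toReal) < zeta {0} →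
      lam * ρ lam < lam' * ρ lam' :=
  lambda_rho_strict_mono_general hd zeta hzeta0 hzetann hP1 hP2 c1 c2 hc1 hc2 hP3 hP4 ρ hρ
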